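/- Let σ_{AB} be a two-qubit density operator and let σ̂_{AB} = (1/4) Σ_{s,t∈F₂} (XZ(s,t)⊗XZ(s,t)) σ_{AB} (XZ(s,t)⊗XZ(s,t))† be its discrete twirl, where XZ(s,t) = Xˢ Zᵗ are Pauli operators. Then σ̂_{AB} is Bell-diagonal: σ̂_{AB} = Σ_{x,z∈F₂} P(x,z) |ψ(x,z)⟩⟨ψ(x,z)|, where P(x,z) = ⟨ψ(x,z)| σ_{AB} |ψ(x,z)⟩ and |ψ(x,z)⟩ = (1/√2)(|0⟩|x⟩ + (−1)ᶻ|1⟩|1+x⟩) are the Bell states. -/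

import Mathlib

open scoped Classical ComplexOrder
open Kronecker Matrix

/-- The Pauli bit-flip operator `X` on a qubit. -/
noncomputable def pauliX : Matrix (ZMod 2) (ZMod 2) ℂ :=
  Matrix.of fun i j => if i = j + 1 then 1 else 0

/-- The Pauli phase-flip operator `Z` on a qubit. -/
noncomputable def pauliZ : Matrix (ZMod 2) (ZMod 2) ℂ :=
  Matrix.of fun i j => if i = j then (if i = 1 then -1 else 1) else 0

/-- The Pauli operator `XZ(s,t) = Xˢ Zᵗ`. -/
noncomputable def pauliXZ (s t : ZMod 2) : Matrix (ZMod 2) (ZMod 2) ℂ :=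
  pauliX ^ s.val * pauliZ ^ t.val

/-- The Bell state `|ψ(x,z)⟩ = (1/√2)(|0⟩|x⟩ + (−1)ᶻ|1⟩|1+x⟩)`. -/
noncomputable def bell (x z : ZMod 2) : ZMod 2 × ZMod 2 → ℂ :=
  fun p => ((Real.sqrt 2)⁻¹ : ℝ) *
    ((if p = (0, x) then 1 else 0) +
      (if z = 1 then -1 else 1) * (if p = (1, 1 + x) then 1 else 0))

/-!
In the Bell basis, `X ⊗ X` and `Z ⊗ Z` act diagonally, multiplying `ψ(x,z)` by `(-1)ᶻ` and
`(-1)ˣ`; hence `XZ(s,t) ⊗ XZ(s,t)` multiplies it by the character `(-1)^(sz+tx)`. Conjugation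
therefore multiplies the `(b, b')` Bell-basis entry of `σ` by `χ(b) χ(b')`, and averaging over
`(s,t)` kills the off-diagonal entries by orthogonality of characters.
-/

theorem Matrix.kronecker_pow {n α : Type*} [Fintype n] [DecidableEq n] [CommSemiring α]
    (A B : Matrix n n α) (k : ℕ) : (A ^ k) ⊗ₖ (B ^ k) = (A ⊗ₖ B) ^ k := by
  induction k with
  | zero => simp
  | succ k ih => rw [pow_succ, pow_succ, pow_succ, mul_kronecker_mul, ih]

section Twirl

variable {n ι : Type*} [Fintype n] [Fintype ι]

theorem conjTranspose_mul_mul_apply_self (B σ : Matrix n n ℂ) (b : n) :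
    (Bᴴ * σ * B) b b = ∑ p, ∑ q, star (B p b) * σ p q * B q b := by
  simp only [Matrix.mul_apply, conjTranspose_apply, Finset.sum_mul]
  exact Finset.sum_comm

variable [DecidableEq n]

theorem smul_sum_diagonal_mul_mul_conjTranspose_diagonal (χ : ι → n → ℂ) (c : ℂ)
    (hχ : ∀ b b', c * ∑ i, χ i b * star (χ i b') = if b = b' then 1 else 0)
    (M : Matrix n n ℂ) :
    c • ∑ i, diagonal (χ i) * M * (diagonal (χ i))ᴴ = diagonal fun b => M b b := by
  ext b b'
  have h : c * ∑ i, χ i b * M b b' * star (χ i b') = M b b' * (if b = b' then 1 else 0) := by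
    rw [← hχ, Finset.mul_sum, Finset.mul_sum, Finset.mul_sum]
    exact Finset.sum_congr rfl fun i _ => by ring
  by_cases hb : b = b'
  · subst hb
    simpa [diagonal_conjTranspose, Matrix.sum_apply, diagonal_mul, mul_diagonal] using h
  · simpa [diagonal_conjTranspose, Matrix.sum_apply, diagonal_mul, mul_diagonal, hb] using h

theorem mul_diagonal_mul_conjTranspose (B : Matrix n n ℂ) (d : n → ℂ) :
    B * diagonal d * Bᴴ = ∑ b, d b • Matrix.of fun p q => B p b * star (B q b) := by
  ext p q
  rw [Matrix.mul_apply]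
  simp only [mul_diagonal, conjTranspose_apply, Matrix.sum_apply, Matrix.smul_apply, of_apply,
    smul_eq_mul]
  exact Finset.sum_congr rfl fun b _ => by ring

theorem smul_sum_conj_eq_dephasing (B : Matrix n n ℂ) (hB : B * Bᴴ = 1)
    (U : ι → Matrix n n ℂ) (χ : ι → n → ℂ) (hU : ∀ i, U i * B = B * diagonal (χ i)) (c : ℂ)
    (hχ : ∀ b b', c * ∑ i, χ i b * star (χ i b') = if b = b' then 1 else 0)
    (σ : Matrix n n ℂ) :
    c • ∑ i, U i * σ * (U i)ᴴ =
      ∑ b, (∑ p, ∑ q, star (B p b) * σ p q * B q b) •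
        Matrix.of fun p q => B p b * star (B q b) := by
  have conj_eq i : U i * σ * (U i)ᴴ =
      B * (diagonal (χ i) * (Bᴴ * σ * B) * (diagonal (χ i))ᴴ) * Bᴴ := by
    calc U i * σ * (U i)ᴴ = U i * (B * Bᴴ) * σ * (B * Bᴴ) * (U i)ᴴ := by
          rw [hB, Matrix.mul_one, Matrix.mul_one]
      _ = U i * B * (Bᴴ * σ * B) * (U i * B)ᴴ := by
          simp only [conjTranspose_mul, Matrix.mul_assoc]
      _ = _ := by
          rw [hU, conjTranspose_mul]
          simp only [Matrix.mul_assoc]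
  rw [Finset.sum_congr rfl fun i _ => conj_eq i, ← Finset.sum_mul, ← Finset.mul_sum,
    ← Matrix.smul_mul, ← Matrix.mul_smul,
    smul_sum_diagonal_mul_mul_conjTranspose_diagonal χ c hχ, mul_diagonal_mul_conjTranspose]
  simp only [conjTranspose_mul_mul_apply_self]

end Twirl

lemma ZMod.sum_two {M : Type*} [AddCommMonoid M] (f : ZMod 2 → M) : ∑ i, f i = f 0 + f 1 :=
  Fin.sum_univ_two f

lemma ZMod.eq_zero_or_eq_one_of_two (a : ZMod 2) : a = 0 ∨ a = 1 := by
  fin_cases a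
  exacts [Or.inl rfl, Or.inr rfl]

lemma inv_sqrt_two_mul_self : ((√2 : ℝ) : ℂ)⁻¹ * ((√2 : ℝ) : ℂ)⁻¹ = 2⁻¹ := by
  rw [← mul_inv, ← Complex.ofReal_mul, Real.mul_self_sqrt zero_le_two, Complex.ofReal_ofNat]

noncomputable def bellMatrix : Matrix (ZMod 2 × ZMod 2) (ZMod 2 × ZMod 2) ℂ :=
  Matrix.of fun p b => bell b.1 b.2 p

/-- The eigenvalue `(-1)^(sz+tx)` of `XZ(s,t) ⊗ XZ(s,t)` on `ψ(x,z)`, for `i = (s,t)` and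
`b = (x,z)`. -/
noncomputable def bellSign (i b : ZMod 2 × ZMod 2) : ℂ :=
  ((-1) ^ b.2.val) ^ i.1.val * ((-1) ^ b.1.val) ^ i.2.val

theorem bellMatrix_mul_conjTranspose : bellMatrix * bellMatrixᴴ = 1 := by
  ext ⟨p₁, p₂⟩ ⟨q₁, q₂⟩
  simp only [Matrix.mul_apply, conjTranspose_apply, bellMatrix, bell, of_apply,
    Fintype.sum_prod_type, ZMod.sum_two]
  rcases p₁.eq_zero_or_eq_one_of_two with rfl | rfl <;>
    rcases p₂.eq_zero_or_eq_one_of_two with rfl | rfl <;>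
    rcases q₁.eq_zero_or_eq_one_of_two with rfl | rfl <;>
    rcases q₂.eq_zero_or_eq_one_of_two with rfl | rfl <;>
    simp [one_apply, show (1 + 1 : ZMod 2) = 0 from rfl, inv_sqrt_two_mul_self] <;>
    norm_num

theorem pauliX_kronecker_mul_bellMatrix :
    (pauliX ⊗ₖ pauliX) * bellMatrix = bellMatrix * diagonal fun b => (-1) ^ b.2.val := by
  ext ⟨p₁, p₂⟩ ⟨x, z⟩
  simp only [Matrix.mul_apply, kroneckerMap_apply, pauliX, bellMatrix, bell,
    of_apply, Fintype.sum_prod_type, ZMod.sum_two]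
  rcases p₁.eq_zero_or_eq_one_of_two with rfl | rfl <;>
    rcases p₂.eq_zero_or_eq_one_of_two with rfl | rfl <;>
    rcases x.eq_zero_or_eq_one_of_two with rfl | rfl <;>
    rcases z.eq_zero_or_eq_one_of_two with rfl | rfl <;>
    simp [show (1 + 1 : ZMod 2) = 0 from rfl, ZMod.val_one]

theorem pauliZ_kronecker_mul_bellMatrix :
    (pauliZ ⊗ₖ pauliZ) * bellMatrix = bellMatrix * diagonal fun b => (-1) ^ b.1.val := by
  ext ⟨p₁, p₂⟩ ⟨x, z⟩
  simp only [Matrix.mul_apply, kroneckerMap_apply, pauliZ, bellMatrix, bell,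
    of_apply, Fintype.sum_prod_type, ZMod.sum_two]
  rcases p₁.eq_zero_or_eq_one_of_two with rfl | rfl <;>
    rcases p₂.eq_zero_or_eq_one_of_two with rfl | rfl <;>
    rcases x.eq_zero_or_eq_one_of_two with rfl | rfl <;>
    rcases z.eq_zero_or_eq_one_of_two with rfl | rfl <;>
    simp [show (1 + 1 : ZMod 2) = 0 from rfl, ZMod.val_one]

theorem pauliXZ_kronecker_self (s t : ZMod 2) :
    pauliXZ s t ⊗ₖ pauliXZ s t = (pauliX ⊗ₖ pauliX) ^ s.val * (pauliZ ⊗ₖ pauliZ) ^ t.val := by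
  rw [pauliXZ, mul_kronecker_mul, kronecker_pow, kronecker_pow]

theorem pauliXZ_kronecker_mul_bellMatrix (i : ZMod 2 × ZMod 2) :
    (pauliXZ i.1 i.2 ⊗ₖ pauliXZ i.1 i.2) * bellMatrix = bellMatrix * diagonal (bellSign i) := by
  have hX : SemiconjBy bellMatrix (diagonal fun b => (-1) ^ b.2.val) (pauliX ⊗ₖ pauliX) :=
    pauliX_kronecker_mul_bellMatrix.symm
  have hZ : SemiconjBy bellMatrix (diagonal fun b => (-1) ^ b.1.val) (pauliZ ⊗ₖ pauliZ) :=
    pauliZ_kronecker_mul_bellMatrix.symm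
  have := ((hX.pow_right i.1.val).mul_right (hZ.pow_right i.2.val)).eq.symm
  rwa [diagonal_pow, diagonal_pow, diagonal_mul_diagonal, ← pauliXZ_kronecker_self] at this

theorem bellSign_orthogonal (b b' : ZMod 2 × ZMod 2) :
    (1 / 4 : ℂ) * ∑ i, bellSign i b * star (bellSign i b') =
      if b = b' then 1 else 0 := by
  obtain ⟨x, z⟩ := b
  obtain ⟨x', z'⟩ := b'
  simp only [bellSign, Fintype.sum_prod_type, ZMod.sum_two]
  rcases x.eq_zero_or_eq_one_of_two with rfl | rfl <;>
    rcases z.eq_zero_or_eq_one_of_two with rfl | rfl <;>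
    rcases x'.eq_zero_or_eq_one_of_two with rfl | rfl <;>
    rcases z'.eq_zero_or_eq_one_of_two with rfl | rfl <;>
    norm_num [ZMod.val_one]

theorem discrete_twirl_is_bell_diagonal_general
    (σ : Matrix ((ZMod 2 × ZMod 2)) ((ZMod 2 × ZMod 2)) ℂ) :
    ((1 / 4 : ℂ) • ∑ s : ZMod 2, ∑ t : ZMod 2,
        (pauliXZ s t ⊗ₖ pauliXZ s t) * σ * (pauliXZ s t ⊗ₖ pauliXZ s t)ᴴ) =
      ∑ x : ZMod 2, ∑ z : ZMod 2,
        (∑ p, ∑ q, star (bell x z p) * σ p q * bell x z q) •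
          (Matrix.of fun p q => bell x z p * star (bell x z q)) := by
  have h := smul_sum_conj_eq_dephasing bellMatrix bellMatrix_mul_conjTranspose
    (fun i : ZMod 2 × ZMod 2 => pauliXZ i.1 i.2 ⊗ₖ pauliXZ i.1 i.2) bellSign
    pauliXZ_kronecker_mul_bellMatrix (1 / 4) bellSign_orthogonal σ
  simpa only [Fintype.sum_prod_type, bellMatrix, of_apply] using h

/-- The discrete twirl `(1/4) Σ_{s,t} (XZ(s,t)⊗XZ(s,t)) σ (XZ(s,t)⊗XZ(s,t))†` of any
two-qubit density operator is Bell-diagonal with coefficients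
`P(x,z) = ⟨ψ(x,z)|σ|ψ(x,z)⟩`. -/
theorem discrete_twirl_is_bell_diagonal
    (σ : Matrix ((ZMod 2 × ZMod 2)) ((ZMod 2 × ZMod 2)) ℂ)
    (hσ : σ.PosSemidef) (htr : σ.trace = 1) :
    ((1 / 4 : ℂ) • ∑ s : ZMod 2, ∑ t : ZMod 2,
        (pauliXZ s t ⊗ₖ pauliXZ s t) * σ * (pauliXZ s t ⊗ₖ pauliXZ s t)ᴴ) =
      ∑ x : ZMod 2, ∑ z : ZMod 2,
        (∑ p, ∑ q, star (bell x z p) * σ p q * bell x z q) •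
          (Matrix.of fun p q => bell x z p * star (bell x z q)) :=
  discrete_twirl_is_bell_diagonal_general σ
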